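/- arXiv:2512.05942 — 8 statements merged into one kernel-verified Lean document; each statement's English description precedes it below -/
import Mathlib

section
/- Let C be a choice function on the integer box B (i.e., C : B → B with C(z) ≤ z for all z ∈ B) satisfying (A1) consistency and (A2) substitutability. Then C is stationary: for all z, z' ∈ B one has C(z ∨ z') = C(C(z) ∨ z'). -/
/-!
With `w = z ⊔ z'`, substitutability applied to `z ≤ w` gives `C w ⊓ z ≤ C z`, so by
distributivity `C w = (C w ⊓ z) ⊔ (C w ⊓ z') ≤ C z ⊔ z'`. Since also `C z ⊔ z' ≤ w`,
consistency yields `C (C z ⊔ z') = C w`.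
-/

namespace SGMMStmt

variable {E : Type*} [Fintype E] [DecidableEq E]

def inBox (b z : E → ℕ) : Prop := ∀ e, z e ≤ b e

end SGMMStmt

theorem SGMMStmt.inBox_sup {E : Type*} {b z z' : E → ℕ} (hz : inBox b z) (hz' : inBox b z') :
    inBox b (z ⊔ z') :=
  fun e => sup_le (hz e) (hz' e)

section ChoiceFunction

variable {α : Type*} [DistribLattice α]

theorem le_sup_of_le_sup_of_inf_le {c y z z' : α} (hc : c ≤ z ⊔ z') (h : c ⊓ z ≤ y) :
    c ≤ y ⊔ z' :=
  calc c = c ⊓ (z ⊔ z') := (inf_eq_left.2 hc).symm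
    _ = c ⊓ z ⊔ c ⊓ z' := inf_sup_left _ _ _
    _ ≤ y ⊔ z' := sup_le_sup h inf_le_right

variable (S : α → Prop) (C : α → α)

theorem choice_sup_le_choice_sup (hC : ∀ z, S z → C z ≤ z)
    (hA2 : ∀ z z', S z → z' ≤ z → C z ⊓ z' ≤ C z') {z z' : α} (hw : S (z ⊔ z')) :
    C (z ⊔ z') ≤ C z ⊔ z' :=
  le_sup_of_le_sup_of_inf_le (hC _ hw) (hA2 _ _ hw le_sup_left)

theorem choice_sup_eq_choice_choice_sup (hC : ∀ z, S z → C z ≤ z)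
    (hA1 : ∀ z z', S z → z' ≤ z → C z ≤ z' → C z' = C z)
    (hA2 : ∀ z z', S z → z' ≤ z → C z ⊓ z' ≤ C z') {z z' : α} (hz : S z)
    (hw : S (z ⊔ z')) :
    C (z ⊔ z') = C (C z ⊔ z') :=
  (hA1 _ _ hw (sup_le_sup_right (hC z hz) z')
    (choice_sup_le_choice_sup S C hC hA2 hw)).symm

end ChoiceFunction

namespace SGMMStmt

variable {E : Type*} [Fintype E] [DecidableEq E]

/-- A choice function on the integer box satisfying (A1) consistency and
(A2) substitutability is stationary: `C (z ⊔ z') = C (C z ⊔ z')`. -/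
theorem statement0 (b : E → ℕ) (C : (E → ℕ) → (E → ℕ))
    (hC : ∀ z, inBox b z → C z ≤ z)
    (hA1 : ∀ z z' : E → ℕ, inBox b z → z' ≤ z → C z ≤ z' → C z' = C z)
    (hA2 : ∀ z z' : E → ℕ, inBox b z → z' ≤ z → C z ⊓ z' ≤ C z')
    (z z' : E → ℕ) (hz : inBox b z) (hz' : inBox b z') :
    C (z ⊔ z') = C (C z ⊔ z') :=
  choice_sup_eq_choice_choice_sup (inBox b) C hC hA1 hA2 hz (inBox_sup hz hz')

end SGMMStmt
end

section
/- Let C be a choice function on the integer box B satisfying (A1), (A2), (A3). Let z ∈ B be acceptable (C(z) = z) and let e ∈ E satisfy z(e) < b(e). Then the following are equivalent: (i) e is interesting under z; (ii) there is an acceptable z̃ ∈ B with z̃ ≻ z and z̃(e) > z(e); (iii) C(z + 1^e) ≠ z; (iv) C(z + 1^e) equals either z + 1^e, or z + 1^e − 1^{e'} for some e' ∈ E − {e}. -/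
/-!
Write `w = z + 1^e`. An `e`-increase `z'` of `z` with `C z' (e) > z(e)` yields the improvement
`C z'`, by consistency, because `C z' ≤ C z' ∨ z ≤ z'`. An improvement `zt` has `w ≤ zt ∨ z`, so
substitutability gives `zt ∧ w ≤ C w`, whose `e`-entry is `z(e) + 1`; hence `C w ≠ z`. Size
monotonicity gives `|C w| ≥ |C z| = |w| - 1`, so `C w ≤ w` drops at most one unit of `w`, and when
`C w ≠ z` that unit is not at `e`. Then `C w (e) = w(e)`, and `w` shows that `e` is interesting.
-/

namespace SGMMStmt

variable {E : Type*} [Fintype E] [DecidableEq E]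

/-- `e` is interesting under `z`: some increase of `z` only at `e` (staying in the box)
is partly retained by the choice function at `e`. -/
def Interesting (b : E → ℕ) (C : (E → ℕ) → (E → ℕ)) (z : E → ℕ) (e : E) : Prop :=
  ∃ z', inBox b z' ∧ z e < z' e ∧ (∀ e', e' ≠ e → z' e' = z e') ∧ z e < C z' e


section AddSingleOne

variable {ι : Type*} [DecidableEq ι]

theorem add_single_one_apply_self (z : ι → ℕ) (e : ι) :
    (z + Pi.single e 1 : ι → ℕ) e = z e + 1 := by
  simp

theorem add_single_one_apply_of_ne (z : ι → ℕ) {e x : ι} (hx : x ≠ e) :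
    (z + Pi.single e 1 : ι → ℕ) x = z x := by
  simp [Pi.single_eq_of_ne hx]

theorem sum_add_single_one [Fintype ι] (z : ι → ℕ) (e : ι) :
    ∑ x, (z + Pi.single e 1 : ι → ℕ) x = ∑ x, z x + 1 := by
  simp [Finset.sum_add_distrib]

theorem eq_or_exists_add_single_eq_of_sum_le_succ [Fintype ι] {f g : ι → ℕ} (hle : f ≤ g)
    (hsum : ∑ x, g x ≤ ∑ x, f x + 1) : f = g ∨ ∃ e, f + Pi.single e 1 = g := by
  refine or_iff_not_imp_left.2 fun hne => ?_
  obtain ⟨e, hlt⟩ : ∃ e, f e < g e := by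
    by_contra! hge
    exact hne (le_antisymm hle hge)
  have hle' : f + Pi.single e 1 ≤ g := by
    intro x
    by_cases hx : x = e
    · subst hx
      rw [add_single_one_apply_self]
      exact hlt
    · rw [add_single_one_apply_of_ne f hx]
      exact hle x
  refine ⟨e, hle'.eq_or_lt.resolve_right fun hlt' => ?_⟩
  have : ∑ x, (f + Pi.single e 1 : ι → ℕ) x < ∑ x, g x := Fintype.sum_strictMono hlt'
  rw [sum_add_single_one] at this
  omega

end AddSingleOne

namespace inBox

variable {ι : Type*} {b z z' : ι → ℕ}

theorem mono (hz : inBox b z) (h : z' ≤ z) : inBox b z' := fun x => (h x).trans (hz x)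

theorem sup (hz : inBox b z) (hz' : inBox b z') : inBox b (z ⊔ z') :=
  fun x => max_le (hz x) (hz' x)

theorem add_single_one [DecidableEq ι] (hz : inBox b z) {e : ι} (he : z e < b e) :
    inBox b (z + Pi.single e 1) := by
  intro x
  by_cases hx : x = e
  · subst hx
    rw [add_single_one_apply_self]
    exact he
  · rw [add_single_one_apply_of_ne z hx]
    exact hz x

end inBox

section ChoiceFunction

variable {ι : Type*} (b : ι → ℕ) (C : (ι → ℕ) → (ι → ℕ))

def IsChoiceFunction : Prop := ∀ z, inBox b z → C z ≤ z

def IsConsistent : Prop :=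
  ∀ z z' : ι → ℕ, inBox b z → z' ≤ z → C z ≤ z' → C z' = C z

def IsSubstitutable : Prop := ∀ z z' : ι → ℕ, inBox b z → z' ≤ z → C z ⊓ z' ≤ C z'

def IsSizeMonotone [Fintype ι] : Prop :=
  ∀ z z' : ι → ℕ, inBox b z → z' ≤ z → ∑ e, C z' e ≤ ∑ e, C z e

variable {b C}

theorem Interesting.exists_acceptable_improvement (hC : IsChoiceFunction b C)
    (hA1 : IsConsistent b C) {z : ι → ℕ} {e : ι} (hint : Interesting b C z e) :
    ∃ zt, inBox b zt ∧ C zt = zt ∧ C (zt ⊔ z) = zt ∧ z e < zt e := by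
  obtain ⟨z', hz', hlt, hagree, hCe⟩ := hint
  have hzz' : z ≤ z' := by
    intro x
    by_cases hx : x = e
    · subst hx
      exact hlt.le
    · rw [hagree x hx]
  have hCz' : C z' ≤ z' := hC z' hz'
  exact ⟨C z', hz'.mono hCz', hA1 z' (C z') hz' hCz' le_rfl,
    hA1 z' (C z' ⊔ z) hz' (sup_le hCz' hzz') le_sup_left, hCe⟩

theorem lt_choice_add_single_one_of_improvement [DecidableEq ι] (hA2 : IsSubstitutable b C)
    {z zt : ι → ℕ} (hz : inBox b z) (htbox : inBox b zt) (htsup : C (zt ⊔ z) = zt) {e : ι}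
    (hte : z e < zt e) :
    z e < C (z + Pi.single e 1) e := by
  have hw : z + Pi.single e 1 ≤ zt ⊔ z := by
    intro x
    by_cases hx : x = e
    · subst hx
      rw [add_single_one_apply_self]
      exact le_max_of_le_left hte
    · rw [add_single_one_apply_of_ne z hx]
      exact le_max_right _ _
  have := hA2 (zt ⊔ z) _ (htbox.sup hz) hw e
  rw [htsup, Pi.inf_apply, add_single_one_apply_self] at this
  exact (le_inf hte le_rfl).trans this

theorem choice_add_single_one_eq_or_exists_add_single_eq [Fintype ι] [DecidableEq ι]
    (hC : IsChoiceFunction b C) (hA3 : IsSizeMonotone b C) {z : ι → ℕ} (hz : inBox b z)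
    (hacc : C z = z) {e : ι} (he : z e < b e) (hne : C (z + Pi.single e 1) ≠ z) :
    C (z + Pi.single e 1) = z + Pi.single e 1 ∨
      ∃ e', e' ≠ e ∧ C (z + Pi.single e 1) + Pi.single e' 1 = z + Pi.single e 1 := by
  have hwbox := hz.add_single_one he
  have hsum : ∑ x, (z + Pi.single e 1 : ι → ℕ) x ≤ ∑ x, C (z + Pi.single e 1) x + 1 := by
    have := hA3 _ z hwbox le_self_add
    rw [hacc] at this
    rw [sum_add_single_one]
    omega
  refine (eq_or_exists_add_single_eq_of_sum_le_succ (hC _ hwbox) hsum).imp_right ?_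
  rintro ⟨e', heq⟩
  refine ⟨e', ?_, heq⟩
  rintro rfl
  exact hne (add_right_cancel heq)

theorem interesting_of_choice_add_single_one [DecidableEq ι] {z : ι → ℕ} (hz : inBox b z)
    {e : ι} (he : z e < b e)
    (h : C (z + Pi.single e 1) = z + Pi.single e 1 ∨
      ∃ e', e' ≠ e ∧ C (z + Pi.single e 1) + Pi.single e' 1 = z + Pi.single e 1) :
    Interesting b C z e := by
  have hCe : C (z + Pi.single e 1 : ι → ℕ) e = z e + 1 := by
    rcases h with h | ⟨e', hne, heq⟩
    · rw [h, add_single_one_apply_self]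
    · have := congrFun heq e
      rwa [Pi.add_apply, Pi.single_eq_of_ne hne.symm, add_zero,
        add_single_one_apply_self] at this
  refine ⟨_, hz.add_single_one he, ?_, fun x hx => add_single_one_apply_of_ne z hx, ?_⟩
  · rw [add_single_one_apply_self]
    exact Nat.lt_succ_self _
  · rw [hCe]
    exact Nat.lt_succ_self _

end ChoiceFunction

/-- Lemma 3.1: for an acceptable `z` and an unsaturated `e`, the four conditions
(interesting; a revealed-preferred acceptable improvement at `e`; `C (z + 1^e) ≠ z`;
the two-case description of `C (z + 1^e)`) are equivalent. -/
theorem statement1 (b : E → ℕ) (C : (E → ℕ) → (E → ℕ))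
    (hC : ∀ z, inBox b z → C z ≤ z)
    (hA1 : ∀ z z' : E → ℕ, inBox b z → z' ≤ z → C z ≤ z' → C z' = C z)
    (hA2 : ∀ z z' : E → ℕ, inBox b z → z' ≤ z → C z ⊓ z' ≤ C z')
    (hA3 : ∀ z z' : E → ℕ, inBox b z → z' ≤ z → ∑ e, C z' e ≤ ∑ e, C z e)
    (z : E → ℕ) (hz : inBox b z) (hacc : C z = z) (e : E) (he : z e < b e) :
    [ Interesting b C z e,
      ∃ zt, inBox b zt ∧ C zt = zt ∧ C (zt ⊔ z) = zt ∧ z e < zt e,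
      C (z + Pi.single e 1) ≠ z,
      C (z + Pi.single e 1) = z + Pi.single e 1 ∨
        ∃ e', e' ≠ e ∧ C (z + Pi.single e 1) + Pi.single e' 1 = z + Pi.single e 1 ].TFAE := by
  tfae_have 1 → 2 := Interesting.exists_acceptable_improvement hC hA1
  tfae_have 2 → 3
  | ⟨zt, htbox, _, htsup, hte⟩, heq => by
    have := lt_choice_add_single_one_of_improvement hA2 hz htbox htsup hte
    rw [heq] at this
    exact this.false
  tfae_have 3 → 4 := choice_add_single_one_eq_or_exists_add_single_eq hC hA3 hz hacc he
  tfae_have 4 → 1 := interesting_of_choice_add_single_one hz he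
  tfae_finish

end SGMMStmt
end

section
/- Let C be a choice function on the integer box B satisfying (A1) and (A2). Let z ∈ B be acceptable and let e ∈ E be not interesting under z. Then for every ε ∈ ℕ with z(e) + ε ≤ b(e), one has C(z + ε·1^e) = z. -/
/-!
Off `e` the vector `C (z + ε • 1^e)` is bounded by `z` because `C` only shrinks its argument, and at
`e` because `e` is not interesting; so `z` lies between `C (z + ε • 1^e)` and `z + ε • 1^e`, and
consistency (A1) gives `C (z + ε • 1^e) = C z = z`.
-/

namespace SGMMStmt

variable {E : Type*} [Fintype E] [DecidableEq E]

omit [Fintype E] in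
lemma inBox_add_single {b z : E → ℕ} {e : E} {ε : ℕ} (hz : inBox b z) (hε : z e + ε ≤ b e) :
    inBox b (z + Pi.single e ε) := by
  intro e'
  rcases eq_or_ne e' e with rfl | h
  · simpa using hε
  · simpa [Pi.single_eq_of_ne h] using hz e'

omit [Fintype E] in
lemma le_of_le_add_single {x z : E → ℕ} {e : E} {ε : ℕ} (hx : x ≤ z + Pi.single e ε)
    (he : x e ≤ z e) : x ≤ z := by
  intro e'
  rcases eq_or_ne e' e with rfl | h
  · exact he
  · simpa [Pi.single_eq_of_ne h] using hx e'

omit [Fintype E] in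
lemma apply_add_single_le_of_not_interesting {b z : E → ℕ} {C : (E → ℕ) → (E → ℕ)} {e : E}
    {ε : ℕ} (hni : ¬ Interesting b C z e) (hbox : inBox b (z + Pi.single e ε)) (hε : 0 < ε) :
    C (z + Pi.single e ε) e ≤ z e := by
  by_contra h
  exact hni ⟨_, hbox, by simpa using hε, fun e' h' => by simp [Pi.single_eq_of_ne h'],
    not_le.mp h⟩

theorem statement2_general (b : E → ℕ) (C : (E → ℕ) → (E → ℕ))
    (hC : ∀ z, inBox b z → C z ≤ z)
    (hA1 : ∀ z z' : E → ℕ, inBox b z → z' ≤ z → C z ≤ z' → C z' = C z)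
    (z : E → ℕ) (hz : inBox b z) (hacc : C z = z) (e : E)
    (hni : ¬ Interesting b C z e) :
    ∀ ε : ℕ, z e + ε ≤ b e → C (z + Pi.single e ε) = z := by
  intro ε hε
  have hbox := inBox_add_single hz hε
  rcases Nat.eq_zero_or_pos ε with rfl | hpos
  · simpa using hacc
  have hCz : C (z + Pi.single e ε) ≤ z :=
    le_of_le_add_single (hC _ hbox) (apply_add_single_le_of_not_interesting hni hbox hpos)
  rw [← hA1 _ z hbox (le_add_of_nonneg_right fun _ => Nat.zero_le _) hCz, hacc]

/-- Property (3.1): if `e` is not interesting under an acceptable `z`, then increasing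
`z` at `e` by any `ε` within capacity leaves the chosen vector equal to `z`.
(Note `Pi.single e ε = ε • 1^e`.) -/
theorem statement2 (b : E → ℕ) (C : (E → ℕ) → (E → ℕ))
    (hC : ∀ z, inBox b z → C z ≤ z)
    (hA1 : ∀ z z' : E → ℕ, inBox b z → z' ≤ z → C z ≤ z' → C z' = C z)
    (hA2 : ∀ z z' : E → ℕ, inBox b z → z' ≤ z → C z ⊓ z' ≤ C z')
    (z : E → ℕ) (hz : inBox b z) (hacc : C z = z) (e : E)
    (hni : ¬ Interesting b C z e) :
    ∀ ε : ℕ, z e + ε ≤ b e → C (z + Pi.single e ε) = z :=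
  statement2_general b C hC hA1 z hz hacc e hni

end SGMMStmt
end

section
/- Let C be a choice function on the integer box B satisfying (A1), (A2), (A3). Let z ∈ B be acceptable and let a, c ∈ E be distinct with z(a) < b(a) and C(z + 1^a) = z + 1^a − 1^c. Then: (i) z(c) > 0 and c is not interesting under z; (ii) z ≺ z + 1^a − 1^c; and (iii) c is not interesting under z + 1^a − 1^c. -/
namespace SGMMStmt

variable {E : Type*} [Fintype E] [DecidableEq E]

private lemma le_app {f g : E → ℕ} (h : f ≤ g) (e : E) : f e ≤ g e := h e

private lemma le_fun {f g : E → ℕ} (h : ∀ e, f e ≤ g e) : f ≤ g := h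

/-- Lemma 3.2: for acceptable `z` and a "legal pair" `(a, c)`, i.e. with
`C (z + 1^a) = z + 1^a - 1^c`: (i) `z c > 0` and `c` is not interesting under `z`;
(ii) `z ≺ z + 1^a - 1^c`  (i.e. `C ((z + 1^a - 1^c) ⊔ z) = z + 1^a - 1^c`);
(iii) `c` is not interesting under `z + 1^a - 1^c`. -/
theorem statement3 (b : E → ℕ) (C : (E → ℕ) → (E → ℕ))
    (hC : ∀ z, inBox b z → C z ≤ z)
    (hA1 : ∀ z z' : E → ℕ, inBox b z → z' ≤ z → C z ≤ z' → C z' = C z)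
    (hA2 : ∀ z z' : E → ℕ, inBox b z → z' ≤ z → C z ⊓ z' ≤ C z')
    (hA3 : ∀ z z' : E → ℕ, inBox b z → z' ≤ z → ∑ e, C z' e ≤ ∑ e, C z e)
    (z : E → ℕ) (hz : inBox b z) (hacc : C z = z)
    (a c : E) (hac : a ≠ c) (hcap : z a < b a)
    (hleg : C (z + Pi.single a 1) + Pi.single c 1 = z + Pi.single a 1) :
    (0 < z c ∧ ¬ Interesting b C z c) ∧
    C ((z + Pi.single a 1 - Pi.single c 1) ⊔ z) = z + Pi.single a 1 - Pi.single c 1 ∧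
    ¬ Interesting b C (z + Pi.single a 1 - Pi.single c 1) c := by
  classical
  set w := z + Pi.single a 1 with hw
  clear_value w
  have hwe : ∀ e, w e = z e + (if e = a then 1 else 0) := by
    intro e; simp [hw, Pi.single_apply]
  have hCwe : ∀ e, C w e + (if e = c then 1 else 0) = w e := by
    intro e
    have h := congrFun hleg e
    simpa [Pi.single_apply] using h
  have hwc : w c = z c := by
    have := hwe c; simpa [Ne.symm hac] using this
  have hCwc : C w c + 1 = z c := by
    have := hCwe c; simpa [hwc] using this
  have hzc : 0 < z c := by omega
  have hboxw : inBox b w := by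
    intro e
    have h1 := hwe e
    have h2 := hz e
    by_cases h : e = a
    · rw [if_pos h] at h1; rw [h] at h1 ⊢; omega
    · rw [if_neg h] at h1; omega
  have hvC : w - Pi.single c 1 = C w := by
    funext e
    have h1 := hCwe e
    simp only [Pi.sub_apply, Pi.single_apply]
    by_cases h : e = c <;> simp [h] at h1 ⊢ <;> omega
  have hvc : (w - Pi.single c 1 : E → ℕ) c = z c - 1 := by
    simp [Pi.sub_apply, Pi.single_apply, hwc]
  have hve : ∀ e, e ≠ c → (w - Pi.single c 1 : E → ℕ) e = w e := by
    intro e h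
    simp [Pi.sub_apply, Pi.single_apply, h]
  refine ⟨⟨hzc, ?_⟩, ?_, ?_⟩
  · -- c is not interesting under z
    rintro ⟨z', hbox', hgt, heq, hCgt⟩
    have hbc : z c < b c := lt_of_lt_of_le hgt (hbox' c)
    set y := z + Pi.single c 1 with hy
    set u := w + Pi.single c 1 with hu
    clear_value y u
    have hye : ∀ e, y e = z e + (if e = c then 1 else 0) := by
      intro e; simp [hy, Pi.single_apply]
    have hue : ∀ e, u e = z e + (if e = a then 1 else 0) + (if e = c then 1 else 0) := by
      intro e
      have h1 := hwe e
      simp only [hu, Pi.add_apply, Pi.single_apply]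
      omega
    have hboxy : inBox b y := by
      intro e
      have h1 := hye e
      have h2 := hz e
      by_cases h : e = c
      · rw [if_pos h] at h1; rw [h] at h1 ⊢; omega
      · rw [if_neg h] at h1; omega
    have hboxu : inBox b u := by
      intro e
      have h1 := hue e
      have h2 := hz e
      by_cases h : e = a
      · have hne : ¬ (e = c) := by rw [h]; exact hac
        rw [if_pos h, if_neg hne] at h1; rw [h] at h1 ⊢; omega
      · by_cases h' : e = c
        · rw [if_neg h, if_pos h'] at h1; rw [h'] at h1 ⊢; omega
        · rw [if_neg h, if_neg h'] at h1; omega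
    have hyz' : y ≤ z' := le_fun (by
      intro e
      have h1 := hye e
      by_cases h : e = c
      · rw [if_pos h] at h1; rw [h] at h1 ⊢; omega
      · have h3 := heq e h; rw [if_neg h] at h1; omega)
    have hCyc : C y c = z c + 1 := by
      have h2 := le_app (hA2 z' y hbox' hyz') c
      have h3 := le_app (hC y hboxy) c
      have h4 := hye c
      rw [if_pos rfl] at h4
      simp only [Pi.inf_apply] at h2
      omega
    have hwu : w ≤ u := le_fun (by
      intro e; simp only [hu, Pi.add_apply]; exact le_self_add)
    have hCuc : C u c + 1 ≤ z c := by
      have h4 := le_app (hA2 u w hboxu hwu) c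
      simp only [Pi.inf_apply] at h4
      omega
    have huc : u c = z c + 1 := by
      have := hue c; simpa [Ne.symm hac] using this
    -- sums
    have hsumw : ∑ e, w e = (∑ e, z e) + 1 := by
      simp [hw, Finset.sum_add_distrib, Pi.single_apply]
    have hsumu : ∑ e, u e = (∑ e, z e) + 2 := by
      simp [hu, Finset.sum_add_distrib, Pi.single_apply, hsumw]
    have hsumy : ∑ e, y e = (∑ e, z e) + 1 := by
      simp [hy, Finset.sum_add_distrib, Pi.single_apply]
    have hsumCw : ∑ e, C w e = ∑ e, z e := by
      have := congrArg (fun f => ∑ e, f e) hleg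
      simp only [Pi.add_apply, Finset.sum_add_distrib] at this
      simp only [Pi.single_apply] at this
      simp at this
      omega
    have hA3wu : (∑ e, z e) ≤ ∑ e, C u e := by
      have := hA3 u w hboxu hwu
      omega
    have hle : ∀ e, C u e ≤ u e := fun e => le_app (hC u hboxu) e
    have hsplitC : ∑ e, C u e = C u c + ∑ e ∈ Finset.univ.erase c, C u e :=
      (Finset.add_sum_erase _ _ (Finset.mem_univ c)).symm
    have hsplitU : ∑ e, u e = u c + ∑ e ∈ Finset.univ.erase c, u e :=
      (Finset.add_sum_erase _ _ (Finset.mem_univ c)).symm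
    have heq' : ∀ e ∈ Finset.univ.erase c, C u e = u e := by
      by_contra h
      push_neg at h
      obtain ⟨e₀, he₀, hne⟩ := h
      have hlt : C u e₀ < u e₀ := lt_of_le_of_ne (hle e₀) hne
      have hstrict : ∑ e ∈ Finset.univ.erase c, C u e < ∑ e ∈ Finset.univ.erase c, u e :=
        Finset.sum_lt_sum (fun i _ => hle i) ⟨e₀, he₀, hlt⟩
      omega
    have hyu : y ≤ u := le_fun (by
      intro e
      have h1 := hye e
      have h2 := hue e
      omega)
    have hCy : ∀ e, C y e = y e := by
      intro e
      by_cases h : e = c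
      · have h9 := hye e
        rw [if_pos h] at h9
        rw [h] at h9 ⊢
        omega
      · have h5 := le_app (hA2 u y hboxu hyu) e
        simp only [Pi.inf_apply] at h5
        have h6 := heq' e (Finset.mem_erase.mpr ⟨h, Finset.mem_univ e⟩)
        have h7 := le_app (hC y hboxy) e
        have h8 := le_app hyu e
        omega
    have hsumCy : ∑ e, C y e = (∑ e, z e) + 1 := by
      rw [Finset.sum_congr rfl (fun e _ => hCy e)]; exact hsumy
    have hA3yu : ∑ e, C y e ≤ ∑ e, C u e := hA3 u y hboxu hyu
    have hsumerase : ∑ e ∈ Finset.univ.erase c, C u e ≤ ∑ e ∈ Finset.univ.erase c, u e :=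
      Finset.sum_le_sum (fun i _ => hle i)
    omega
  · -- z ≺ z + 1^a - 1^c
    have hsup : (w - Pi.single c 1) ⊔ z = w := by
      funext e
      simp only [Pi.sup_apply]
      by_cases h : e = c
      · subst h
        rw [hvc, hwc]; omega
      · rw [hve e h]
        have h1 := hwe e
        omega
    rw [hsup]
    exact hvC.symm
  · -- c is not interesting under z + 1^a - 1^c
    rintro ⟨z', hbox', hgt, heq, hCgt⟩
    rw [hvc] at hgt hCgt
    have hwle : w ≤ z' := le_fun (by
      intro e
      by_cases h : e = c
      · rw [h]; omega
      · rw [heq e h, hve e h])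
    have h2 := le_app (hA2 z' w hbox' hwle) c
    simp only [Pi.inf_apply] at h2
    omega

end SGMMStmt
end

section
/- Let C be a choice function on the integer box B satisfying (A1), (A2), (A3), let z ∈ B be acceptable, and let (a(1), c(1)), …, (a(k), c(k)) be pairwise disjoint pairs of elements of E with z(a(i)) < b(a(i)) and C(z + 1^{a(i)}) = z + 1^{a(i)} − 1^{c(i)} for each i. Then for every I ⊆ {1, …, k}, C(z + 1^{a(1)} + … + 1^{a(k)} − ∑_{i∈I} 1^{c(i)}) = z + 1^{a(1)} + … + 1^{a(k)} − 1^{c(1)} − … − 1^{c(k)}. In particular, the vector z* := z + ∑_i 1^{a(i)} − ∑_i 1^{c(i)} is acceptable and satisfies z* ≻ z. -/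
namespace SGMMStmt

variable {E : Type*} [Fintype E] [DecidableEq E]

lemma sumS_apply {k : ℕ} (f : Fin k → E) (hf : Function.Injective f)
    (I : Finset (Fin k)) (e : E) :
    ((∑ i ∈ I, Pi.single (f i) (1:ℕ) : E → ℕ)) e = if ∃ i ∈ I, f i = e then 1 else 0 := by
  rw [Finset.sum_apply]
  by_cases h : ∃ i ∈ I, f i = e
  · obtain ⟨i, hi, hie⟩ := h
    rw [if_pos ⟨i, hi, hie⟩, Finset.sum_eq_single i]
    · simp [Pi.single_apply, hie.symm]
    · intro j hj hji
      have hne : e ≠ f j := fun h' => hji ((hf (hie.trans h')).symm)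
      simp [Pi.single_apply, hne]
    · exact fun h => absurd hi h
  · rw [if_neg h]
    refine Finset.sum_eq_zero fun j hj => ?_
    have hne : e ≠ f j := fun h' => h ⟨j, hj, h'.symm⟩
    simp [Pi.single_apply, hne]

/-- Lemma 3.6: for acceptable `z` and pairwise disjoint legal pairs
`(a 1, c 1), …, (a k, c k)` (i.e. `C (z + 1^{a i}) = z + 1^{a i} - 1^{c i}`),
for every subset `I ⊆ [k]`,
`C (z + ∑ᵢ 1^{a i} - ∑_{i ∈ I} 1^{c i}) = z + ∑ᵢ 1^{a i} - ∑ᵢ 1^{c i}`.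
In particular `z* := z + ∑ᵢ 1^{a i} - ∑ᵢ 1^{c i}` is acceptable and `z* ≻ z`. -/
theorem statement6 (b : E → ℕ) (C : (E → ℕ) → (E → ℕ))
    (hC : ∀ z, inBox b z → C z ≤ z)
    (hA1 : ∀ z z' : E → ℕ, inBox b z → z' ≤ z → C z ≤ z' → C z' = C z)
    (hA2 : ∀ z z' : E → ℕ, inBox b z → z' ≤ z → C z ⊓ z' ≤ C z')
    (hA3 : ∀ z z' : E → ℕ, inBox b z → z' ≤ z → ∑ e, C z' e ≤ ∑ e, C z e)
    (z : E → ℕ) (hz : inBox b z) (hacc : C z = z)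
    (k : ℕ) (a c : Fin k → E)
    (hainj : Function.Injective a) (hcinj : Function.Injective c)
    (hac : ∀ i j, a i ≠ c j)
    (hcap : ∀ i, z (a i) < b (a i))
    (hleg : ∀ i, C (z + Pi.single (a i) 1) + Pi.single (c i) 1 = z + Pi.single (a i) 1) :
    (∀ I : Finset (Fin k),
      C (z + ∑ i, Pi.single (a i) 1 - ∑ i ∈ I, Pi.single (c i) 1)
        = z + ∑ i, Pi.single (a i) 1 - ∑ i, Pi.single (c i) 1) ∧
    C (z + ∑ i, Pi.single (a i) 1 - ∑ i, Pi.single (c i) 1)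
        = z + ∑ i, Pi.single (a i) 1 - ∑ i, Pi.single (c i) 1 ∧
    C ((z + ∑ i, Pi.single (a i) 1 - ∑ i, Pi.single (c i) 1) ⊔ z)
        = z + ∑ i, Pi.single (a i) 1 - ∑ i, Pi.single (c i) 1 := by
  set Sa : E → ℕ := ∑ i, Pi.single (a i) 1 with hSa_def
  set Sc : E → ℕ := ∑ i, Pi.single (c i) 1 with hSc_def
  have hSaap : ∀ e, Sa e = if ∃ i, a i = e then 1 else 0 := by
    intro e; rw [hSa_def, sumS_apply a hainj Finset.univ e]; simp
  have hScap : ∀ e, Sc e = if ∃ i, c i = e then 1 else 0 := by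
    intro e; rw [hSc_def, sumS_apply c hcinj Finset.univ e]; simp
  have hSaa : ∀ i, Sa (a i) = 1 := fun i => by rw [hSaap]; exact if_pos ⟨i, rfl⟩
  have hScc : ∀ i, Sc (c i) = 1 := fun i => by rw [hScap]; exact if_pos ⟨i, rfl⟩
  have hSac : ∀ i, Sa (c i) = 0 := fun i => by
    rw [hSaap]; exact if_neg (fun ⟨j, hj⟩ => hac j i hj)
  have hSca : ∀ i, Sc (a i) = 0 := fun i => by
    rw [hScap]; exact if_neg (fun ⟨j, hj⟩ => hac i j hj.symm)
  have hdisj : ∀ e, Sa e = 0 ∨ Sc e = 0 := by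
    intro e; rw [hSaap, hScap]
    by_cases h : ∃ i, a i = e
    · right; obtain ⟨i, hi⟩ := h
      exact if_neg (fun ⟨j, hj⟩ => hac i j (hi.trans hj.symm))
    · left; exact if_neg h
  -- z (c i) ≥ 1  (from hleg at c i)
  have hlegc : ∀ i, C (z + Pi.single (a i) 1) (c i) + 1 = z (c i) := by
    intro i
    have h := congrFun (hleg i) (c i)
    have hne : c i ≠ a i := (hac i i).symm
    simpa [Pi.single_apply, hne] using h
  have hScz : ∀ e, Sc e ≤ z e := by
    intro e; rw [hScap]
    by_cases h : ∃ i, c i = e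
    · obtain ⟨i, hi⟩ := h
      rw [if_pos ⟨i, hi⟩, ← hi]
      have h2 := hlegc i
      exact h2 ▸ Nat.le_add_left 1 _
    · simp [h]
  have hsumS : ∀ {k' : ℕ} (f : Fin k' → E), Function.Injective f →
      ∑ e, (∑ i, Pi.single (f i) (1:ℕ) : E → ℕ) e = k' := by
    intro k' f hf
    simp only [Finset.sum_apply]
    rw [Finset.sum_comm]
    simp [Pi.single_apply]
  have hsumSa : ∑ e, Sa e = k := hsumS a hainj
  have hsumSc : ∑ e, Sc e = k := hsumS c hcinj
  set w : E → ℕ := z + Sa with hw_def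
  have hwe : ∀ e, w e = z e + Sa e := fun e => rfl
  have hzwe : ∀ e, z e ≤ w e := fun e => Nat.le_add_right (z e) (Sa e)
  have hzw : z ≤ w := Pi.le_def.mpr hzwe
  have hwbox : inBox b w := by
    intro e
    by_cases h : ∃ i, a i = e
    · obtain ⟨i, hi⟩ := h
      subst hi
      have h1 := hSaa i
      have h2 := hcap i
      have h3 := hwe (a i)
      omega
    · have h0 : Sa e = 0 := by rw [hSaap]; exact if_neg h
      have := hz e
      have h3 := hwe e
      omega
  have hCw : ∀ e, C w e ≤ w e := Pi.le_def.mp (hC w hwbox)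
  have hsub_w : ∀ i, z + Pi.single (a i) 1 ≤ w := by
    intro i
    refine Pi.le_def.mpr fun e => ?_
    show z e + (Pi.single (a i) (1:ℕ) : E → ℕ) e ≤ z e + Sa e
    apply Nat.add_le_add_left
    rw [Pi.single_apply, hSaap]
    by_cases h : e = a i
    · subst h; rw [if_pos rfl, if_pos ⟨i, rfl⟩]
    · rw [if_neg h]; omega
  have hkeyA : ∀ i, C w (c i) + 1 ≤ z (c i) := by
    intro i
    have h2 := hA2 w (z + Pi.single (a i) 1) hwbox (hsub_w i)
    have h3 := Pi.le_def.mp h2 (c i)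
    rw [Pi.inf_apply] at h3
    have hne : c i ≠ a i := (hac i i).symm
    have e1 : ((z + Pi.single (a i) 1 : E → ℕ)) (c i) = z (c i) := by
      simp [Pi.single_apply, hne]
    have e2 : w (c i) = z (c i) := by rw [hwe, hSac i]; omega
    have h4 : C w (c i) ≤ z (c i) := e2 ▸ hCw (c i)
    rw [e1, min_eq_left h4] at h3
    have h5 := hlegc i
    omega
  have hCwle' : ∀ e, C w e ≤ (w - Sc) e := by
    intro e
    show C w e ≤ w e - Sc e
    by_cases h : ∃ i, c i = e
    · obtain ⟨i, hi⟩ := h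
      subst hi
      have h1 := hkeyA i
      have e2 : w (c i) = z (c i) := by rw [hwe, hSac i]; omega
      have h3 := hScc i
      omega
    · have h0 : Sc e = 0 := by rw [hScap]; exact if_neg h
      have := hCw e
      omega
  have hsumCw_ge : ∑ e, z e ≤ ∑ e, C w e := by
    have := hA3 w z hwbox hzw
    rwa [hacc] at this
  have hsum_wSc : ∑ e, (w - Sc) e = ∑ e, z e := by
    have h1 : ∑ e, ((w - Sc) e + Sc e) = ∑ e, w e := by
      refine Finset.sum_congr rfl fun e _ => ?_
      show w e - Sc e + Sc e = w e
      have h2 : Sc e ≤ w e := le_trans (hScz e) (hzwe e)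
      omega
    rw [Finset.sum_add_distrib] at h1
    have h2 : ∑ e, w e = ∑ e, z e + k := by
      simp only [hwe, Finset.sum_add_distrib, hsumSa]
    omega
  have hsumCw_le : ∑ e, C w e ≤ ∑ e, (w - Sc) e :=
    Finset.sum_le_sum fun e _ => hCwle' e
  have hCweq : C w = w - Sc := by
    funext e
    by_contra hne
    have hlt : C w e < (w - Sc) e := lt_of_le_of_ne (hCwle' e) hne
    have := Finset.sum_lt_sum (fun e _ => hCwle' e) ⟨e, Finset.mem_univ e, hlt⟩
    omega
  have hmain : ∀ I : Finset (Fin k),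
      C (w - ∑ i ∈ I, Pi.single (c i) 1) = w - Sc := by
    intro I
    set ScI : E → ℕ := ∑ i ∈ I, Pi.single (c i) 1 with hScI_def
    have hScIle : ∀ e, ScI e ≤ Sc e := by
      intro e
      rw [hScI_def, hSc_def, Finset.sum_apply, Finset.sum_apply]
      exact Finset.sum_le_sum_of_subset (Finset.subset_univ I)
    have h1 : w - ScI ≤ w := Pi.le_def.mpr fun e => tsub_le_self
    have h2 : C w ≤ w - ScI := by
      rw [hCweq]
      exact Pi.le_def.mpr fun e => tsub_le_tsub_left (hScIle e) (w e)
    rw [hA1 w (w - ScI) hwbox h1 h2, hCweq]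
  refine ⟨hmain, hmain Finset.univ, ?_⟩
  have hsup : (w - Sc) ⊔ z = w := by
    funext e
    show (w e - Sc e) ⊔ z e = w e
    have h1 := hScz e
    have h2 := hwe e
    rcases hdisj e with h | h <;> omega
  rw [hsup, hCweq]

end SGMMStmt
end

section
/- Let (L, ≤) be a finite distributive lattice, P a prime ideal of L, and let Y/X and Y'/X' be distinct p-factors in the girdle G(P). Then X ≠ X' and Y ≠ Y'. -/
namespace GirdleStmt

variable {L : Type*} [DistribLattice L] [Fintype L]

/-- `P` is an ideal of the lattice: closed under joins of its members and under
meets with arbitrary elements. -/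
def IsIdealSet (P : Set L) : Prop :=
  (∀ X ∈ P, ∀ Y ∈ P, X ⊔ Y ∈ P) ∧ (∀ X ∈ P, ∀ Z : L, X ⊓ Z ∈ P)

/-- `P` is a filter of the lattice: closed under meets of its members and under
joins with arbitrary elements. -/
def IsFilterSet (P : Set L) : Prop :=
  (∀ X ∈ P, ∀ Y ∈ P, X ⊓ Y ∈ P) ∧ (∀ X ∈ P, ∀ Z : L, X ⊔ Z ∈ P)

/-- `P` is a prime ideal: a (nonempty, proper) ideal whose complement is a filter. -/
def IsPrimeIdealSet (P : Set L) : Prop :=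
  IsIdealSet P ∧ IsFilterSet Pᶜ ∧ P.Nonempty ∧ Pᶜ.Nonempty

/-- The girdle of a prime ideal `P`: the set of p-factors `Y/X` (covering pairs,
encoded as pairs `(X, Y)` with `X ⋖ Y`) with `X ∈ P` and `Y ∉ P`. -/
def girdle (P : Set L) : Set (L × L) :=
  {p | p.1 ⋖ p.2 ∧ p.1 ∈ P ∧ p.2 ∉ P}

/-- A maximal (dense) chain of the lattice, from the minimum to the maximum, with
consecutive elements in covering relation. -/
structure MaxChain (L : Type*) [Lattice L] where
  n : ℕ
  ch : Fin (n + 1) → L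
  bot : ∀ X : L, ch 0 ≤ X
  top : ∀ X : L, X ≤ ch (Fin.last n)
  cov : ∀ i : Fin n, ch i.castSucc ⋖ ch i.succ

/-- The order `G(P) ≺ G(P')` on girdles: in every maximal chain, every p-factor of
`G(P)` occurring in the chain occurs strictly earlier than every p-factor of `G(P')`
occurring in the chain. -/
def GirdlePrec (P P' : Set L) : Prop :=
  ∀ (C : MaxChain L) (i j : Fin C.n),
    (C.ch i.castSucc, C.ch i.succ) ∈ girdle P →
    (C.ch j.castSucc, C.ch j.succ) ∈ girdle P' →
    (i : ℕ) < (j : ℕ)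

/-! Two distinct covers of `X` meet in `X`, which lies in `P`, while the complement of `P` is
closed under meets; dually, two distinct elements covered by `Y` join to `Y`, which lies outside
`P`, while `P` is closed under joins. -/

theorem injOn_fst_girdle {α : Type*} [DistribLattice α] {P : Set α} (hP : IsFilterSet Pᶜ) :
    Set.InjOn Prod.fst (girdle P) := by
  rintro ⟨X, Y⟩ ⟨hXY, hX, hY⟩ ⟨X', Y'⟩ ⟨hXY', -, hY'⟩ (rfl : X = X')
  refine Prod.ext rfl (by_contra fun hYY' => ?_)
  have hmeet : Y ⊓ Y' = X := hXY.wcovBy.inf_eq hXY'.wcovBy hYY'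
  exact hP.1 Y hY Y' hY' (hmeet ▸ hX)

theorem injOn_snd_girdle {α : Type*} [DistribLattice α] {P : Set α} (hP : IsIdealSet P) :
    Set.InjOn Prod.snd (girdle P) := by
  rintro ⟨X, Y⟩ ⟨hXY, hX, hY⟩ ⟨X', Y'⟩ ⟨hXY', hX', -⟩ (rfl : Y = Y')
  refine Prod.ext (by_contra fun hXX' => ?_) rfl
  have hjoin : X ⊔ X' = Y := hXY.wcovBy.sup_eq hXY'.wcovBy hXX'
  exact hY (hjoin ▸ hP.1 X hX X' hX')

/-- Property (5.3): distinct p-factors in the girdle of a prime ideal `P` are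
pairwise disjoint: they share neither their lower nor their upper element. -/
theorem statement12 (P : Set L) (hP : IsPrimeIdealSet P)
    (X Y X' Y' : L)
    (h1 : (X, Y) ∈ girdle P) (h2 : (X', Y') ∈ girdle P)
    (hne : (X, Y) ≠ (X', Y')) :
    X ≠ X' ∧ Y ≠ Y' :=
  ⟨fun hX => hne (injOn_fst_girdle hP.2.1 h1 h2 hX),
    fun hY => hne (injOn_snd_girdle hP.1 h1 h2 hY)⟩

end GirdleStmt
end

section
/- Let (L, ≤) be a finite distributive lattice and let G = G(P) and G' = G(P') be girdles of distinct prime ideals P, P'. Then G ≺ G' if and only if μ(G) < μ(G'), where μ(G) is the maximal element of P and μ(G') the maximal element of P'. -/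
namespace GirdleStmt

variable {L : Type*} [DistribLattice L] [Fintype L]

section Aux

variable {P : Set L}

lemma mem_iff_le (hid : IsIdealSet P) {mu : L} (hmu : IsGreatest P mu) (x : L) :
    x ∈ P ↔ x ≤ mu := by
  constructor
  · exact fun h => hmu.2 h
  · intro h
    have h2 := hid.2 mu hmu.1 x
    rwa [inf_eq_right.mpr h] at h2

lemma exists_covBy_le' {a b : L} (h : a < b) : ∃ c, a ⋖ c ∧ c ≤ b := by
  classical
  have hb : b ∈ Finset.univ.filter (fun x => a < x ∧ x ≤ b) := by simp [h]
  obtain ⟨c, hc, hmin⟩ : ∃ c ∈ Finset.univ.filter (fun x => a < x ∧ x ≤ b),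
      ∀ x ∈ Finset.univ.filter (fun x => a < x ∧ x ≤ b), ¬ x < c := by
    obtain ⟨c, hc⟩ := Finset.exists_minimal ⟨b, hb⟩
    exact ⟨c, hc.1, fun x hx => hc.not_lt hx⟩
  simp only [Finset.mem_filter] at hc
  refine ⟨c, ⟨hc.2.1, fun d hd hdc => ?_⟩, hc.2.2⟩
  exact hmin d (by simp [hd, le_trans hdc.le hc.2.2]) hdc

lemma exists_chain_aux : ∀ (N : ℕ) (a b : L), a ≤ b →
    ({x | a ≤ x ∧ x ≤ b} : Set L).ncard ≤ N →
    ∃ (k : ℕ) (f : ℕ → L), f 0 = a ∧ f k = b ∧ ∀ i < k, f i ⋖ f (i + 1) := by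
  intro N
  induction N with
  | zero =>
    intro a b hab hcard
    have : 0 < ({x | a ≤ x ∧ x ≤ b} : Set L).ncard :=
      (Set.ncard_pos (Set.toFinite _)).mpr ⟨a, le_refl a, hab⟩
    omega
  | succ N ih =>
    intro a b hab hcard
    rcases eq_or_lt_of_le hab with rfl | hlt
    · exact ⟨0, fun _ => a, rfl, rfl, fun i hi => absurd hi (by omega)⟩
    · obtain ⟨c, hac, hcb⟩ := exists_covBy_le' hlt
      have hss : ({x | c ≤ x ∧ x ≤ b} : Set L) ⊂ {x | a ≤ x ∧ x ≤ b} := by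
        constructor
        · rintro x ⟨h1, h2⟩
          exact ⟨le_trans hac.lt.le h1, h2⟩
        · intro hsub
          exact hac.lt.not_ge (hsub ⟨le_refl a, hab⟩).1
      have hlt' := Set.ncard_lt_ncard hss (Set.toFinite _)
      obtain ⟨k, f, hf0, hfk, hcov⟩ := ih c b hcb (by omega)
      refine ⟨k + 1, fun i => if i = 0 then a else f (i - 1), by simp, by simp [hfk], ?_⟩
      intro i hi
      rcases Nat.eq_zero_or_pos i with rfl | hpos
      · simpa [hf0] using hac
      · have h1 : i ≠ 0 := by omega
        have h2 : i + 1 ≠ 0 := by omega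
        simp only [if_neg h1, if_neg h2]
        have he : i - 1 + 1 = i := by omega
        have hc := hcov (i - 1) (by omega)
        rwa [he] at hc

lemma exists_chain (a b : L) (hab : a ≤ b) :
    ∃ (k : ℕ) (f : ℕ → L), f 0 = a ∧ f k = b ∧ ∀ i < k, f i ⋖ f (i + 1) :=
  exists_chain_aux _ a b hab le_rfl

lemma chain_mono {f : ℕ → L} {k : ℕ} (hf : ∀ i < k, f i ⋖ f (i + 1)) :
    ∀ i j, i ≤ j → j ≤ k → f i ≤ f j := by
  intro i j hij hjk
  induction j with
  | zero => simp_all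
  | succ m ihm =>
    rcases Nat.lt_succ_iff_lt_or_eq.mp (Nat.lt_succ_of_le hij) with h | rfl
    · exact le_trans (ihm (by omega) (by omega)) (hf m (by omega)).le
    · rfl

lemma glue_chains {f g : ℕ → L} {k l : ℕ} (hfg : f k = g 0)
    (hf : ∀ i < k, f i ⋖ f (i + 1)) (hg : ∀ i < l, g i ⋖ g (i + 1)) :
    ∃ h : ℕ → L, (∀ i ≤ k, h i = f i) ∧ (∀ i, h (k + i) = g i) ∧
      ∀ i < k + l, h i ⋖ h (i + 1) := by
  refine ⟨fun i => if i ≤ k then f i else g (i - k), fun i hi => by simp [hi], ?_, ?_⟩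
  · intro i
    rcases Nat.eq_zero_or_pos i with rfl | hpos
    · simp [hfg]
    · have h0 : ¬ (k + i ≤ k) := by omega
      simp [h0]
  · intro i hi
    dsimp only
    have key : ∀ j, k ≤ j → (if j ≤ k then f j else g (j - k)) = g (j - k) := by
      intro j hj
      rcases eq_or_lt_of_le hj with rfl | h
      · simp [hfg]
      · simp [not_le.mpr h]
    by_cases h1 : i + 1 ≤ k
    · have h2 : i ≤ k := by omega
      simp only [if_pos h1, if_pos h2]
      exact hf i (by omega)
    · have hik : k ≤ i := by omega
      rw [key i hik, key (i + 1) (by omega)]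
      have he : i - k + 1 = i + 1 - k := by omega
      have hc := hg (i - k) (by omega)
      rwa [he] at hc

lemma maxChain_strictMono (C : MaxChain L) : StrictMono C.ch :=
  Fin.strictMono_iff_lt_succ.mpr fun i => (C.cov i).lt

end Aux

/-- Lemma 5.3: for girdles of distinct prime ideals `P, P'`,
`G(P) ≺ G(P')` holds iff `μ(G(P)) < μ(G(P'))`, where `μ` is the maximal element of
the corresponding prime ideal. -/
theorem statement13 (P P' : Set L)
    (hP : IsPrimeIdealSet P) (hP' : IsPrimeIdealSet P') (hne : P ≠ P')
    (mu mu' : L) (hmu : IsGreatest P mu) (hmu' : IsGreatest P' mu') :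
    GirdlePrec P P' ↔ mu < mu' := by
  constructor
  · -- forward: GirdlePrec → mu < mu'
    intro hprec
    have hmemP : ∀ x : L, x ∈ P ↔ x ≤ mu := mem_iff_le hP.1 hmu
    have hmemP' : ∀ x : L, x ∈ P' ↔ x ≤ mu' := mem_iff_le hP'.1 hmu'
    have hmune : mu ≠ mu' := by
      intro h
      apply hne
      ext x
      rw [hmemP, hmemP', h]
    by_contra hnlt
    -- then mu ≰ mu'
    have hnle : ¬ mu ≤ mu' := fun h => hnlt (lt_of_le_of_ne h hmune)
    have hinf_lt : mu ⊓ mu' < mu := by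
      rcases lt_or_eq_of_le (inf_le_left : mu ⊓ mu' ≤ mu) with h | h
      · exact h
      · exact absurd (h ▸ inf_le_right : mu ≤ mu') hnle
    haveI : Nonempty L := ⟨mu⟩
    classical
    set m : L := Finset.univ.inf' Finset.univ_nonempty id with hm
    set M : L := Finset.univ.sup' Finset.univ_nonempty id with hM
    have hmle : ∀ x : L, m ≤ x := fun x => Finset.inf'_le id (Finset.mem_univ x)
    have hleM : ∀ x : L, x ≤ M := fun x => Finset.le_sup' id (Finset.mem_univ x)
    have hMnotP : M ∉ P := by
      obtain ⟨y, hy⟩ := hP.2.2.2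
      have := hP.2.1.2 y hy M
      rwa [sup_eq_right.mpr (hleM y)] at this
    obtain ⟨k1, f1, hf10, hf1k, hf1cov⟩ := exists_chain m (mu ⊓ mu') (hmle _)
    obtain ⟨k2, f2, hf20, hf2k, hf2cov⟩ := exists_chain (mu ⊓ mu') mu inf_le_left
    obtain ⟨k3, f3, hf30, hf3k, hf3cov⟩ := exists_chain mu M (hleM _)
    have hk2 : 1 ≤ k2 := by
      rcases Nat.eq_zero_or_pos k2 with rfl | h
      · exact absurd (hf20 ▸ hf2k : mu ⊓ mu' = mu) (ne_of_lt hinf_lt)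
      · exact h
    have hk3 : 1 ≤ k3 := by
      rcases Nat.eq_zero_or_pos k3 with rfl | h
      · exact absurd (hf3k ▸ hf30 ▸ hmu.1 : M ∈ P) hMnotP
      · exact h
    obtain ⟨h12, h12f1, h12f2, h12cov⟩ := glue_chains (hf1k.trans hf20.symm) hf1cov hf2cov
    have h12last : h12 (k1 + k2) = mu := (h12f2 k2).trans hf2k
    obtain ⟨h, hh12, hhf3, hhcov⟩ := glue_chains (h12last.trans hf30.symm) h12cov hf3cov
    set n := k1 + k2 + k3 with hn
    set C : MaxChain L := ⟨n, fun i => h (i : ℕ),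
      fun X => by
        have e : h 0 = m := by
          have := hh12 0 (by omega); rw [this, h12f1 0 (by omega), hf10]
        simpa [e] using hmle X,
      fun X => by
        have e : h n = M := by
          have := hhf3 k3; rw [hn]; rw [this, hf3k]
        simpa [Fin.last, e] using hleM X,
      fun i => by
        have := hhcov (i : ℕ) i.isLt
        simpa using this⟩ with hC
    have hi : k1 + k2 < n := by omega
    have hj : k1 < n := by omega
    have factP : (C.ch (Fin.castSucc ⟨k1 + k2, hi⟩), C.ch (Fin.succ ⟨k1 + k2, hi⟩)) ∈ girdle P := by
      have e1 : C.ch (Fin.castSucc ⟨k1 + k2, hi⟩) = h (k1 + k2) := rfl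
      have e2 : C.ch (Fin.succ ⟨k1 + k2, hi⟩) = h (k1 + k2 + 1) := rfl
      have hval : h (k1 + k2) = mu := (hh12 (k1 + k2) le_rfl).trans h12last
      have hcov' : h (k1 + k2) ⋖ h (k1 + k2 + 1) := hhcov (k1 + k2) (by omega)
      refine ⟨by rw [e1, e2]; exact hcov', ?_, ?_⟩
      · rw [e1, hval]; exact hmu.1
      · rw [e2, hmemP]
        intro hle
        have : h (k1 + k2) < h (k1 + k2 + 1) := hcov'.lt
        rw [hval] at this
        exact absurd (le_antisymm hle this.le) (ne_of_gt this)
    have factP' : (C.ch (Fin.castSucc ⟨k1, hj⟩), C.ch (Fin.succ ⟨k1, hj⟩)) ∈ girdle P' := by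
      have e1 : C.ch (Fin.castSucc ⟨k1, hj⟩) = h k1 := rfl
      have e2 : C.ch (Fin.succ ⟨k1, hj⟩) = h (k1 + 1) := rfl
      have hval : h k1 = mu ⊓ mu' := by
        rw [hh12 k1 (by omega), h12f1 k1 le_rfl, hf1k]
      have hval2 : h (k1 + 1) = f2 1 := by
        rw [hh12 (k1 + 1) (by omega), h12f2 1]
      have hcov' : h k1 ⋖ h (k1 + 1) := hhcov k1 (by omega)
      refine ⟨by rw [e1, e2]; exact hcov', ?_, ?_⟩
      · rw [e1, hval, hmemP']; exact inf_le_right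
      · rw [e2, hval2, hmemP']
        intro hle
        have hlemu : f2 1 ≤ mu := by
          have := chain_mono hf2cov 1 k2 hk2 le_rfl
          rwa [hf2k] at this
        have hinf : f2 1 ≤ mu ⊓ mu' := le_inf hlemu hle
        have hlt2 : f2 0 < f2 1 := (hf2cov 0 (by omega)).lt
        rw [hf20] at hlt2
        exact absurd hinf hlt2.not_ge
    have hfin := hprec C ⟨k1 + k2, hi⟩ ⟨k1, hj⟩ factP factP'
    have hfin' : k1 + k2 < k1 := hfin
    omega
  · -- backward: mu < mu' → GirdlePrec
    intro hlt C i j hgi hgj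
    have hmemP : ∀ x : L, x ∈ P ↔ x ≤ mu := mem_iff_le hP.1 hmu
    have hmemP' : ∀ x : L, x ∈ P' ↔ x ≤ mu' := mem_iff_le hP'.1 hmu'
    obtain ⟨hcovi, hXi, hYi⟩ := hgi
    obtain ⟨hcovj, hXj, hYj⟩ := hgj
    by_contra hcon
    push_neg at hcon
    rcases lt_or_eq_of_le hcon with hji | hji
    · -- j < i : ch j.succ ≤ ch i.castSucc ∈ P ⊆ P'
      have hle : (C.ch (Fin.succ j)) ≤ C.ch (Fin.castSucc i) := by
        apply (maxChain_strictMono C).monotone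
        simp [Fin.le_def]
        omega
      have : C.ch (Fin.succ j) ∈ P' := by
        rw [hmemP']
        exact le_trans hle (le_trans ((hmemP _).mp hXi) hlt.le)
      exact hYj this
    · -- j = i : same factor in both girdles, contradiction via primality of P
      have hEq : (j : Fin C.n) = i := Fin.ext hji
      subst hEq
      -- X := ch j.castSucc, Y := ch j.succ
      set X := C.ch (Fin.castSucc j)
      set Y := C.ch (Fin.succ j)
      have hmu'notP : mu' ∉ P := by
        rw [hmemP]
        exact fun hle => absurd (le_antisymm hle hlt.le) (ne_of_gt hlt)
      have hYinf : Y ⊓ mu' ∉ P := hP.2.1.1 Y hYi mu' hmu'notP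
      have hXle : X ≤ Y ⊓ mu' := le_inf hcovj.lt.le ((hmemP' _).mp hXj)
      have hYne : Y ⊓ mu' ≠ Y := by
        intro hh
        exact hYj ((hmemP' _).mpr (hh ▸ inf_le_right : Y ≤ mu'))
      have : Y ⊓ mu' = X := by
        rcases lt_or_eq_of_le hXle with h | h
        · exact absurd (lt_of_le_of_ne inf_le_left hYne) (hcovj.2 h)
        · exact h.symm
      exact hYinf (this ▸ hXi)


end GirdleStmt
end

section
/- Let (L, ≤) be a finite distributive lattice, P a prime ideal with girdle G = G(P), X := μ(G) the maximal element of P, and Y/X the p-factor of G with first coordinate X. Let Z_1, …, Z_k be the elements of L covering Y. Then the girdles containing the p-factors Z_1/Y, …, Z_k/Y are exactly the immediate successors of G in the poset of girdles ordered by ≺ (i.e., exactly those girdles G' with G ≺ G' such that no girdle G'' satisfies G ≺ G'' ≺ G'). -/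
namespace GirdleStmt

variable {L : Type*} [DistribLattice L] [Fintype L]

section Aux

variable {P Q : Set L}

lemma mem_iff_le' (hP : IsPrimeIdealSet P) {X : L} (hX : IsGreatest P X) {a : L} :
    a ∈ P ↔ a ≤ X := by
  refine ⟨fun h => hX.2 h, fun h => ?_⟩
  have := hP.1.2 X hX.1 a
  rwa [inf_eq_right.mpr h] at this

lemma exists_greatest' (hP : IsPrimeIdealSet P) : ∃ X, IsGreatest P X := by
  classical
  obtain ⟨a, ha⟩ := hP.2.2.1
  set s : Finset L := Finset.univ.filter (· ∈ P) with hs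
  have hsne : s.Nonempty := ⟨a, by simp [hs, ha]⟩
  refine ⟨s.sup' hsne id, ?_, ?_⟩
  · exact Finset.sup'_mem P (fun x hx y hy => hP.1.1 x hx y hy) s hsne id
      (by intro i hi; simpa [hs] using hi)
  · intro b hb; exact Finset.le_sup' id (by simp [hs, hb])

lemma exists_least_compl' (hP : IsPrimeIdealSet P) : ∃ ν, IsLeast Pᶜ ν := by
  classical
  obtain ⟨a, ha⟩ := hP.2.2.2
  set s : Finset L := Finset.univ.filter (· ∈ Pᶜ) with hs
  have hsne : s.Nonempty := ⟨a, by simp [hs]; exact ha⟩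
  refine ⟨s.inf' hsne id, ?_, ?_⟩
  · exact Finset.inf'_mem Pᶜ (fun x hx y hy => hP.2.1.1 x hx y hy) s hsne id
      (by intro i hi; simpa [hs] using hi)
  · intro b hb; exact Finset.inf'_le id (by simp [hs]; exact hb)

lemma not_mem_iff_le' (hP : IsPrimeIdealSet P) {ν : L} (hν : IsLeast Pᶜ ν) {a : L} :
    a ∉ P ↔ ν ≤ a := by
  refine ⟨fun h => hν.2 h, fun h ha => ?_⟩
  have := hP.1.2 a ha ν
  rw [inf_eq_right.mpr h] at this
  exact hν.1 this

lemma prime_nu (hP : IsPrimeIdealSet P) {ν : L} (hν : IsLeast Pᶜ ν) :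
    ∀ b c : L, ν ≤ b ⊔ c → ν ≤ b ∨ ν ≤ c := by
  intro b c h
  by_contra hbc
  push_neg at hbc
  have hb : b ∈ P := by
    by_contra hb; exact hbc.1 ((not_mem_iff_le' hP hν).mp hb)
  have hc : c ∈ P := by
    by_contra hc; exact hbc.2 ((not_mem_iff_le' hP hν).mp hc)
  exact (not_mem_iff_le' hP hν).mpr h (hP.1.1 b hb c hc)

lemma nu_not_le (hP : IsPrimeIdealSet P) {X ν : L} (hX : IsGreatest P X)
    (hν : IsLeast Pᶜ ν) : ¬ ν ≤ X :=
  fun h => (not_mem_iff_le' hP hν).mpr h hX.1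

lemma cover_bound (hP : IsPrimeIdealSet P) {X ν : L} (hX : IsGreatest P X)
    (hν : IsLeast Pᶜ ν) {A B : L} (hAB : A ⋖ B) (hA : A ∈ P) : B ≤ X ⊔ ν := by
  by_cases hB : B ∈ P
  · exact le_trans (hX.2 hB) le_sup_left
  · have hνB : ν ≤ B := (not_mem_iff_le' hP hν).mp hB
    have hνA : ¬ ν ≤ A := fun h => ((not_mem_iff_le' hP hν).mpr h) hA
    have h1 : A < A ⊔ ν := left_lt_sup.mpr hνA
    have h2 : A ⊔ ν ≤ B := sup_le hAB.lt.le hνB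
    rcases h2.lt_or_eq with h | h
    · exact absurd h (hAB.2 h1)
    · rw [← h]; exact sup_le_sup_right (hX.2 hA) ν

lemma covby_tau (hP : IsPrimeIdealSet P) {X ν : L} (hX : IsGreatest P X)
    (hν : IsLeast Pᶜ ν) : X ⋖ X ⊔ ν := by
  refine ⟨left_lt_sup.mpr (nu_not_le hP hX hν), fun c hc1 hc2 => ?_⟩
  by_cases hc : c ∈ P
  · exact absurd (hX.2 hc) (not_le_of_gt hc1)
  · have : X ⊔ ν ≤ c := sup_le hc1.le ((not_mem_iff_le' hP hν).mp hc)
    exact absurd this (not_le_of_gt hc2)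

lemma chain_mono_s16 (C : MaxChain L) : Monotone C.ch :=
  (Fin.strictMono_iff_lt_succ.mpr (fun i => (C.cov i).lt)).monotone

lemma chain_nat (hL : Nonempty L) :
    ∀ (N : ℕ) (u v : L), ({x : L | u ≤ x}).ncard ≤ N → u ≤ v →
      ∃ (n : ℕ) (f : ℕ → L), f 0 = u ∧ f n = v ∧ ∀ i < n, f i ⋖ f (i + 1) := by
  classical
  intro N
  induction N with
  | zero =>
    intro u v hc _
    have : 0 < ({x : L | u ≤ x}).ncard :=
      (Set.ncard_pos (Set.toFinite _)).mpr ⟨u, le_rfl⟩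
    omega
  | succ N ih =>
    intro u v hcard huv
    rcases eq_or_lt_of_le huv with rfl | hlt
    · exact ⟨0, fun _ => u, rfl, rfl, fun i hi => absurd hi (by omega)⟩
    · obtain ⟨c, huc, hcv⟩ := exists_covBy_le_of_lt hlt
      have hsub : ({x : L | c ≤ x}).ncard < ({x : L | u ≤ x}).ncard := by
        apply Set.ncard_lt_ncard _ (Set.toFinite _)
        constructor
        · intro x hx
          exact le_trans huc.lt.le hx
        · intro hsub'
          have : u ∈ {x : L | c ≤ x} := hsub' (le_rfl : u ≤ u)
          exact absurd this (not_le_of_gt huc.lt)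
      obtain ⟨n, f, hf0, hfn, hcov⟩ := ih c v (by omega) hcv
      refine ⟨n + 1, fun i => if i = 0 then u else f (i - 1), by simp, by simp [hfn], ?_⟩
      intro i hi
      rcases Nat.eq_zero_or_pos i with rfl | hpos
      · simpa [hf0] using huc
      · have h1 : ¬ (i = 0) := by omega
        have h2 : ¬ (i + 1 = 0) := by omega
        simp only [h1, h2, if_false]
        have : i - 1 + 1 = i + 1 - 1 := by omega
        have hcov' := hcov (i - 1) (by omega)
        rwa [this] at hcov'

lemma exists_maxChain_through (hL : Nonempty L) {A B : L} (hAB : A ⋖ B) :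
    ∃ (C : MaxChain L) (t : Fin C.n), C.ch t.castSucc = A ∧ C.ch t.succ = B := by
  classical
  obtain ⟨b, hb⟩ : ∃ b : L, ∀ x, b ≤ x :=
    ⟨Finset.univ.inf' Finset.univ_nonempty id, fun x => Finset.inf'_le id (Finset.mem_univ x)⟩
  obtain ⟨tp, htp⟩ : ∃ tp : L, ∀ x, x ≤ tp :=
    ⟨Finset.univ.sup' Finset.univ_nonempty id, fun x => Finset.le_sup' id (Finset.mem_univ x)⟩
  obtain ⟨n1, f1, hf10, hf1n, hf1cov⟩ := chain_nat hL _ b A le_rfl (hb A)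
  obtain ⟨n3, f3, hf30, hf3n, hf3cov⟩ := chain_nat hL _ B tp le_rfl (htp B)
  set n := n1 + 1 + n3 with hn
  set g : ℕ → L := fun i => if i ≤ n1 then f1 i else f3 (i - (n1 + 1)) with hg
  have hg0 : g 0 = b := by simp [hg, hf10]
  have hgn : g n = tp := by
    have h1 : ¬ (n ≤ n1) := by omega
    simp only [hg, h1, if_false]
    have : n - (n1 + 1) = n3 := by omega
    rw [this, hf3n]
  have hgn1 : g n1 = A := by simp [hg, hf1n]
  have hgn1' : g (n1 + 1) = B := by
    have h1 : ¬ (n1 + 1 ≤ n1) := by omega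
    simp [hg, h1, hf30]
  have hgcov : ∀ i < n, g i ⋖ g (i + 1) := by
    intro i hi
    rcases lt_trichotomy i n1 with h | rfl | h
    · have h1 : i ≤ n1 := by omega
      have h2 : i + 1 ≤ n1 := by omega
      simp only [hg, h1, h2, if_true]
      exact hf1cov i h
    · rw [hgn1, hgn1']; exact hAB
    · have h1 : ¬ (i ≤ n1) := by omega
      have h2 : ¬ (i + 1 ≤ n1) := by omega
      simp only [hg, h1, h2, if_false]
      have h3 : i + 1 - (n1 + 1) = i - (n1 + 1) + 1 := by omega
      rw [h3]
      exact hf3cov (i - (n1 + 1)) (by omega)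
  have cbot : ∀ x : L, (fun i : Fin (n + 1) => g i.val) 0 ≤ x := by
    intro x; simp only [Fin.val_zero]; rw [hg0]; exact hb x
  have ctop : ∀ x : L, x ≤ (fun i : Fin (n + 1) => g i.val) (Fin.last n) := by
    intro x; simp only [Fin.val_last]; rw [hgn]; exact htp x
  have ccov : ∀ i : Fin n, (fun i : Fin (n + 1) => g i.val) i.castSucc ⋖
      (fun i : Fin (n + 1) => g i.val) i.succ := by
    intro i
    have := hgcov i.val i.isLt
    simpa [Fin.coe_castSucc, Fin.val_succ] using this
  refine ⟨⟨n, fun i => g i.val, cbot, ctop, ccov⟩, ⟨n1, by show n1 < n; omega⟩, ?_, ?_⟩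
  · simpa using hgn1
  · simpa using hgn1'

lemma crossing (C : MaxChain L) (hP : IsPrimeIdealSet P) {XP ν : L}
    (hX : IsGreatest P XP) (hν : IsLeast Pᶜ ν) :
    ∃ i : Fin C.n, (C.ch i.castSucc, C.ch i.succ) ∈ girdle P ∧
      ∀ t : Fin (C.n + 1), C.ch t ∈ P → (t : ℕ) ≤ (i : ℕ) := by
  classical
  set s : Finset (Fin (C.n + 1)) := Finset.univ.filter (fun t => C.ch t ∈ P) with hs
  have h0 : (0 : Fin (C.n + 1)) ∈ s := by
    simp only [hs, Finset.mem_filter, Finset.mem_univ, true_and]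
    exact (mem_iff_le' hP hX).mpr ((C.bot XP))
  have hsne : s.Nonempty := ⟨0, h0⟩
  set m := s.max' hsne with hm
  have hmem : C.ch m ∈ P := by
    have := s.max'_mem hsne
    simpa [hs] using this
  have hmlt : (m : ℕ) < C.n := by
    have hlast : C.ch (Fin.last C.n) ∉ P :=
      (not_mem_iff_le' hP hν).mpr (C.top ν)
    have hne : m ≠ Fin.last C.n := fun h => hlast (h ▸ hmem)
    have h1 : (m : ℕ) ≤ C.n := Nat.lt_succ_iff.mp m.isLt
    have h2 : (m : ℕ) ≠ C.n := fun h => hne (Fin.ext h)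
    omega
  refine ⟨⟨m, hmlt⟩, ⟨?_, ?_, ?_⟩, ?_⟩
  · exact C.cov _
  · have hcast : (⟨(m : ℕ), hmlt⟩ : Fin C.n).castSucc = m := Fin.ext rfl
    rw [hcast]; exact hmem
  · intro hsucc
    have hmem2 : (⟨(m : ℕ), hmlt⟩ : Fin C.n).succ ∈ s := by
      simp only [hs, Finset.mem_filter, Finset.mem_univ, true_and]; exact hsucc
    have := s.le_max' _ hmem2
    rw [← hm] at this
    have : ((⟨(m : ℕ), hmlt⟩ : Fin C.n).succ : ℕ) ≤ (m : ℕ) := this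
    simp only [Fin.val_succ] at this
    omega
  · intro t ht
    have : t ∈ s := by simp only [hs, Finset.mem_filter, Finset.mem_univ, true_and]; exact ht
    have := s.le_max' t this
    rw [← hm] at this
    exact this

lemma girdlePrec_iff (hP : IsPrimeIdealSet P) (hQ : IsPrimeIdealSet Q)
    {XP νP XQ : L} (hXP : IsGreatest P XP) (hνP : IsLeast Pᶜ νP) (hXQ : IsGreatest Q XQ) :
    GirdlePrec P Q ↔ XP ⊔ νP ≤ XQ := by
  obtain ⟨νQ, hνQ⟩ := exists_least_compl' hQ
  constructor
  · intro h
    by_contra hle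
    have hAB : XP ⋖ XP ⊔ νP := covby_tau hP hXP hνP
    have hL : Nonempty L := ⟨XP⟩
    obtain ⟨C, t, htA, htB⟩ := exists_maxChain_through hL hAB
    obtain ⟨i, hgi, hmaxi⟩ := crossing C hP hXP hνP
    obtain ⟨j, hgj, _⟩ := crossing C hQ hXQ hνQ
    have h1 : (t : ℕ) ≤ (i : ℕ) := by
      have hmem : C.ch t.castSucc ∈ P := by rw [htA]; exact hXP.1
      have := hmaxi t.castSucc hmem
      simpa using this
    have h2 : (j : ℕ) ≤ (t : ℕ) := by
      by_contra hjt
      push_neg at hjt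
      have hle2 : t.succ ≤ j.castSucc := by
        rw [Fin.le_def]; simp; omega
      have hmono := chain_mono_s16 C hle2
      rw [htB] at hmono
      have : C.ch j.castSucc ∉ Q := fun hm => hle (le_trans hmono (hXQ.2 hm))
      exact this hgj.2.1
    have := h C i j hgi hgj
    omega
  · intro hle C i j hgi hgj
    by_contra hij
    push_neg at hij
    have hstep : C.ch i.succ ≤ XP ⊔ νP := cover_bound hP hXP hνP (C.cov i) hgi.2.1
    have hle2 : j.succ ≤ i.succ := by rw [Fin.le_def]; simp; omega
    have : C.ch j.succ ∈ Q :=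
      (mem_iff_le' hQ hXQ).mpr (le_trans (chain_mono_s16 C hle2) (hstep.trans hle))
    exact hgj.2.2 this

end Aux

/-- Lemma 5.7: let `P` be a prime ideal with girdle `G(P)`, `X = μ(G(P))` the maximal
element of `P`, and `Y/X` the p-factor of `G(P)` with lower element `X`. Then the
girdles containing a p-factor of the form `Z/Y` (with `Z` covering `Y`) are exactly
the immediate successors of `G(P)` in the poset of girdles ordered by `≺`
(identifying each girdle with its prime ideal). -/
theorem statement16 (P : Set L) (hP : IsPrimeIdealSet P)
    (X Y : L) (hX : IsGreatest P X) (hXY : (X, Y) ∈ girdle P) :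
    ∀ Q : Set L, IsPrimeIdealSet Q →
      ((∃ Z : L, (Y, Z) ∈ girdle Q) ↔
        (GirdlePrec P Q ∧
          ∀ Q' : Set L, IsPrimeIdealSet Q' → GirdlePrec P Q' → ¬ GirdlePrec Q' Q)) := by
  obtain ⟨νP, hνP⟩ := exists_least_compl' hP
  obtain ⟨hcov, hXP, hYP⟩ := hXY
  -- Y = X ⊔ νP
  have hYeq : Y = X ⊔ νP := by
    have h1 : X ⊔ νP ≤ Y := sup_le hcov.lt.le ((not_mem_iff_le' hP hνP).mp hYP)
    have h2 : X < X ⊔ νP := left_lt_sup.mpr (nu_not_le hP hX hνP)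
    rcases h1.lt_or_eq with h | h
    · exact absurd h (hcov.2 h2)
    · exact h.symm
  intro Q hQ
  obtain ⟨W, hW⟩ := exists_greatest' hQ
  obtain ⟨ν, hν⟩ := exists_least_compl' hQ
  have hPrecPQ : GirdlePrec P Q ↔ Y ≤ W := by
    rw [girdlePrec_iff hP hQ hX hνP hW, ← hYeq]
  constructor
  · rintro ⟨Z, hYZ, hYQ, hZQ⟩
    have hYW : Y ≤ W := hW.2 hYQ
    refine ⟨hPrecPQ.mpr hYW, ?_⟩
    intro Q' hQ' hPQ' hQ'Q
    obtain ⟨W', hW'⟩ := exists_greatest' hQ'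
    obtain ⟨j', hj'⟩ := exists_least_compl' hQ'
    have hYW' : Y ≤ W' := by
      have := (girdlePrec_iff hP hQ' hX hνP hW').mp hPQ'
      rw [← hYeq] at this; exact this
    have hτ : W' ⊔ j' ≤ W := (girdlePrec_iff hQ' hQ hW' hj' hW).mp hQ'Q
    have hZW : ¬ Z ≤ W := fun h => hZQ ((mem_iff_le' hQ hW).mpr h)
    by_cases hZW' : Z ≤ W'
    · exact hZW (le_trans (le_trans hZW' le_sup_left) hτ)
    · have hj'Z : j' ≤ Z :=
        (not_mem_iff_le' hQ' hj').mp (fun h => hZW' (hW'.2 h))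
      have hj'Y : ¬ j' ≤ Y := fun h =>
        (not_mem_iff_le' hQ' hj').mpr h ((mem_iff_le' hQ' hW').mpr hYW')
      have h1 : Y < Y ⊔ j' := left_lt_sup.mpr hj'Y
      have h2 : Y ⊔ j' ≤ Z := sup_le hYZ.lt.le hj'Z
      have h3 : Y ⊔ j' = Z := by
        rcases h2.lt_or_eq with h | h
        · exact absurd h (hYZ.2 h1)
        · exact h
      exact hZW (le_trans (h3 ▸ sup_le_sup_right hYW' j') hτ)
  · rintro ⟨hPQ, hmin⟩
    have hYW : Y ≤ W := hPrecPQ.mp hPQ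
    by_contra hnoZ
    push_neg at hnoZ
    have hallZ : ∀ Z : L, Y ⋖ Z → Z ≤ W := by
      intro Z hZ
      by_contra hZW
      exact hnoZ Z ⟨hZ, (mem_iff_le' hQ hW).mpr hYW,
        fun h => hZW ((mem_iff_le' hQ hW).mp h)⟩
    have hνY : ¬ ν ≤ Y := fun h =>
      (not_mem_iff_le' hQ hν).mpr h ((mem_iff_le' hQ hW).mpr hYW)
    have hYlt : Y < Y ⊔ ν := left_lt_sup.mpr hνY
    obtain ⟨Z0, hYZ0, hZ0le⟩ := exists_covBy_le_of_lt hYlt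
    have hZ0W : Z0 ≤ W := hallZ Z0 hYZ0
    have hνZ0 : ¬ ν ≤ Z0 := fun h =>
      (not_mem_iff_le' hQ hν).mpr h ((mem_iff_le' hQ hW).mpr hZ0W)
    -- minimal j with j ≤ Z0 and ¬ j ≤ Y
    obtain ⟨j, hjZ0', hjmin⟩ := exists_minimal_le_of_wellFoundedLT
      (fun a => a ≤ Z0 ∧ ¬ a ≤ Y) Z0 ⟨le_rfl, fun h => absurd h (not_le_of_gt hYZ0.lt)⟩
    obtain ⟨⟨hjZ0, hjY⟩, hjm⟩ := hjmin
    -- primality of j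
    have hjprime : ∀ b c : L, j ≤ b ⊔ c → j ≤ b ∨ j ≤ c := by
      intro b c h
      by_contra hbc
      push_neg at hbc
      have hdist : j = (j ⊓ b) ⊔ (j ⊓ c) := by
        rw [← inf_sup_left, inf_eq_left.mpr h]
      have hb : j ⊓ b ≤ Y := by
        by_contra hbY
        have := hjm ⟨le_trans inf_le_left hjZ0, hbY⟩ inf_le_left
        exact hbc.1 (le_trans this inf_le_right)
      have hc : j ⊓ c ≤ Y := by
        by_contra hcY
        have := hjm ⟨le_trans inf_le_left hjZ0, hcY⟩ inf_le_left
        exact hbc.2 (le_trans this inf_le_right)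
      exact hjY (hdist ▸ sup_le hb hc)
    have hjν : j ≤ ν := by
      rcases hjprime Y ν (le_trans hjZ0 hZ0le) with h | h
      · exact absurd h hjY
      · exact h
    -- Q' := {a | ¬ j ≤ a}
    set Q' : Set L := {a | ¬ j ≤ a} with hQ'def
    have hQ'prime : IsPrimeIdealSet Q' := by
      refine ⟨⟨?_, ?_⟩, ⟨?_, ?_⟩, ⟨Y, hjY⟩, ⟨j, fun h => h le_rfl⟩⟩
      · intro a ha b hb
        intro h
        rcases hjprime a b h with h' | h'
        · exact ha h'
        · exact hb h'
      · intro a ha z h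
        exact ha (le_trans h inf_le_left)
      · intro a ha b hb
        simp only [Set.mem_compl_iff, hQ'def, Set.mem_setOf_eq, not_not] at *
        exact le_inf ha hb
      · intro a ha z
        simp only [Set.mem_compl_iff, hQ'def, Set.mem_setOf_eq, not_not] at *
        exact le_trans ha le_sup_left
    obtain ⟨W', hW'⟩ := exists_greatest' hQ'prime
    have hj' : IsLeast Q'ᶜ j := by
      constructor
      · simp [hQ'def]
      · intro a ha
        simp only [Set.mem_compl_iff, hQ'def, Set.mem_setOf_eq, not_not] at ha
        exact ha
    -- GirdlePrec P Q'
    have hPQ' : GirdlePrec P Q' := by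
      rw [girdlePrec_iff hP hQ'prime hX hνP hW', ← hYeq]
      exact hW'.2 hjY
    -- GirdlePrec Q' Q
    have hQ'Q : GirdlePrec Q' Q := by
      have hj'eq : ∃ ν', IsLeast Q'ᶜ ν' := ⟨j, hj'⟩
      rw [girdlePrec_iff hQ'prime hQ hW' hj' hW]
      have hmemQ : W' ⊔ j ∈ Q := by
        by_contra hmem
        have hνle : ν ≤ W' ⊔ j := (not_mem_iff_le' hQ hν).mp hmem
        rcases prime_nu hQ hν W' j hνle with h | h
        · exact hW'.1 (le_trans hjν h)
        · exact hνZ0 (le_trans h hjZ0)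
      exact (mem_iff_le' hQ hW).mp hmemQ
    exact hmin Q' hQ'prime hPQ' hQ'Q

end GirdleStmt
end
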